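/- For every real θ, d(θ) := √2 · e^{−2cos θ} / (1 + e^{−4cos θ} + 2e^{−2cos θ} cos(2 sin θ))^{3/4} satisfies d(θ) ≥ d(0) = √2 e/(1 + e²)^{3/2}; i.e. the minimum over θ ∈ [0, 2π) of d(θ) is attained at θ = 0. -/

import Mathlib

/-!
Write `u = e^{-2cos θ}`. The denominator of `d θ` is `(1 + u² + 2u cos(2 sin θ))^{3/4}`, and
`1 + u² + 2u cos(2 sin θ) ≤ (1 + u)²` with equality at `θ = 0`, so `d θ ≥ √2 u / (1 + u)^{3/2}`.
On the range `[e^{-2}, e^2]` of `u`, the function `u ↦ u / (1 + u)^{3/2}` is smallest at the left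
endpoint `u = e^{-2}`, where the bound is `d 0`.
-/

noncomputable section

/-- `d(θ) = √2 e^{-2cos θ} / (1 + e^{-4cos θ} + 2 e^{-2cos θ} cos(2 sin θ))^{3/4}`. -/
def d (θ : ℝ) : ℝ :=
  Real.sqrt 2 * Real.exp (-2 * Real.cos θ) /
    (1 + Real.exp (-4 * Real.cos θ) +
      2 * Real.exp (-2 * Real.cos θ) * Real.cos (2 * Real.sin θ)) ^ ((3 : ℝ) / 4)

open Real

lemma sq_rpow_eq_rpow_two_mul {x : ℝ} (hx : 0 ≤ x) (r : ℝ) : (x ^ 2) ^ r = x ^ (2 * r) := by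
  rw [← rpow_natCast, ← rpow_mul hx, Nat.cast_ofNat]

lemma rpow_three_halves_sq {x : ℝ} (hx : 0 ≤ x) : (x ^ ((3 : ℝ) / 2)) ^ 2 = x ^ 3 := by
  rw [← rpow_natCast, ← rpow_mul hx]
  norm_num

lemma div_one_add_rpow_three_halves_le {a u : ℝ} (ha : 0 < a) (hau : a ≤ u) (hau1 : a * u ≤ 1) :
    a / (1 + a) ^ ((3 : ℝ) / 2) ≤ u / (1 + u) ^ ((3 : ℝ) / 2) := by
  have hu : 0 < u := ha.trans_le hau
  rw [← pow_le_pow_iff_left₀ (by positivity) (by positivity) two_ne_zero, div_pow, div_pow,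
    rpow_three_halves_sq (by positivity), rpow_three_halves_sq (by positivity),
    div_le_div_iff₀ (by positivity) (by positivity)]
  -- `u²(1 + a)³ - a²(1 + u)³ = (u - a)(u + a + 3au - a²u²)`, and `a²u² ≤ au` as `au ≤ 1`.
  have hfactor : 0 ≤ u + a + 3 * a * u - a ^ 2 * u ^ 2 := by nlinarith [mul_pos ha hu]
  nlinarith [mul_nonneg (sub_nonneg.2 hau) hfactor]

lemma neg_one_lt_cos_two_mul_sin (θ : ℝ) : -1 < cos (2 * sin θ) := by
  have habs : |2 * sin θ| < π := by
    rw [abs_mul, abs_two]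
    linarith [abs_sin_le_one θ, pi_gt_three]
  rw [← cos_abs, ← cos_pi]
  exact cos_lt_cos_of_nonneg_of_le_pi (abs_nonneg _) le_rfl habs

lemma d_eq (θ : ℝ) :
    d θ = √2 * exp (-2 * cos θ) /
      (1 + exp (-2 * cos θ) ^ 2 + 2 * exp (-2 * cos θ) * cos (2 * sin θ)) ^ ((3 : ℝ) / 4) := by
  rw [d, ← exp_nat_mul]
  ring_nf

lemma d_zero : d 0 = √2 * exp (-2) / (1 + exp (-2)) ^ ((3 : ℝ) / 2) := by
  rw [d_eq, cos_zero, sin_zero, mul_zero, cos_zero, mul_one, mul_one,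
    show 1 + exp (-2) ^ 2 + 2 * exp (-2) = (1 + exp (-2)) ^ 2 by ring,
    sq_rpow_eq_rpow_two_mul (by positivity)]
  norm_num

lemma div_one_add_rpow_three_halves_le_d (θ : ℝ) :
    √2 * exp (-2 * cos θ) / (1 + exp (-2 * cos θ)) ^ ((3 : ℝ) / 2) ≤ d θ := by
  rw [d_eq]
  set u := exp (-2 * cos θ)
  have hu : 0 < u := exp_pos _
  have hcos := neg_one_lt_cos_two_mul_sin θ
  have hpos : 0 < 1 + u ^ 2 + 2 * u * cos (2 * sin θ) := by
    nlinarith [sq_nonneg (1 - u)]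
  have hle : 1 + u ^ 2 + 2 * u * cos (2 * sin θ) ≤ (1 + u) ^ 2 := by
    nlinarith [cos_le_one (2 * sin θ)]
  gcongr
  calc (1 + u ^ 2 + 2 * u * cos (2 * sin θ)) ^ ((3 : ℝ) / 4)
      ≤ ((1 + u) ^ 2) ^ ((3 : ℝ) / 4) := by gcongr
    _ = (1 + u) ^ ((3 : ℝ) / 2) := by rw [sq_rpow_eq_rpow_two_mul (by positivity)]; norm_num

lemma inv_sq_div_one_add_inv_sq_rpow {t : ℝ} (ht : 0 < t) :
    (t ^ 2)⁻¹ / (1 + (t ^ 2)⁻¹) ^ ((3 : ℝ) / 2) = t / (1 + t ^ 2) ^ ((3 : ℝ) / 2) := by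
  have hsum : 1 + (t ^ 2)⁻¹ = (1 + t ^ 2) / t ^ 2 := by field_simp; ring
  rw [hsum, div_rpow (by positivity) (by positivity), sq_rpow_eq_rpow_two_mul ht.le,
    show (2 : ℝ) * (3 / 2) = (3 : ℕ) by norm_num, rpow_natCast]
  field_simp

/-- `d(θ) ≥ d(0) = √2 e / (1 + e²)^{3/2}` for all real `θ`. -/
theorem stmt_17 :
    (∀ θ : ℝ, d 0 ≤ d θ) ∧
      d 0 = Real.sqrt 2 * Real.exp 1 / (1 + Real.exp 1 ^ 2) ^ ((3 : ℝ) / 2) := by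
  refine ⟨fun θ => ?_, ?_⟩
  · rw [d_zero, mul_div_assoc]
    refine le_trans ?_ (div_one_add_rpow_three_halves_le_d θ)
    rw [mul_div_assoc]
    refine mul_le_mul_of_nonneg_left
      (div_one_add_rpow_three_halves_le (exp_pos _) ?_ ?_) (sqrt_nonneg 2)
    · exact exp_le_exp.2 (by linarith [cos_le_one θ])
    · rw [← exp_add]
      exact exp_le_one_iff.2 (by linarith [neg_one_le_cos θ])
  · rw [d_zero, mul_div_assoc, mul_div_assoc, ← inv_sq_div_one_add_inv_sq_rpow (exp_pos 1),
      ← exp_nat_mul, ← exp_neg]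
    norm_num
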